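/- Let σ > 1, p ≥ 0 and δ > 0. Then sup_{T ∈ ℝ} ∫_{−δ}^{δ} |ζ(σ + i(T+t))|^p (δ − |t|) dt = ∫_{−δ}^{δ} |ζ(σ+it)|^p (δ − |t|) dt, and the same identity holds with the supremum replaced by limsup_{T → ∞}. -/

import Mathlib

open Complex Real Filter MeasureTheory intervalIntegral
open scoped ArithmeticFunction.vonMangoldt

/-!
For `σ > 1`, `log |ζ(σ + iθ)| = ∑ Λ(n) / log n · n^(-σ) cos (θ log n)` has nonnegative
coefficients; expanding the exponential shows that `|ζ(σ + iθ)|^p` is again a cosine series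
`∑ c_x cos (ν_x θ)` with nonnegative summable coefficients. Averaging against the triangle weight
`δ - |t|` multiplies `c_x` by the cosine transform of the weight, `2 (1 - cos (ν δ)) / ν² ≥ 0`.
A cosine series with nonnegative coefficients is largest at `0`, and its value at `0` is a limit
point at `+∞` because the orbit `n ↦ (e^(i n ν_x))_x` of the compact torus returns arbitrarily
close to `1`.
-/

section CosSeries

variable {ι : Type*} {c : ι → ℝ} (ν : ι → ℝ)

noncomputable def cosSeries (c ν : ι → ℝ) (T : ℝ) : ℝ := ∑' i, c i * Real.cos (ν i * T)

lemma summable_mul_cos (hc : Summable c) (T : ℝ) :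
    Summable (fun i => c i * Real.cos (ν i * T)) :=
  hc.abs.of_norm_bounded fun i => by
    simpa [abs_mul] using mul_le_of_le_one_right (abs_nonneg (c i)) (abs_cos_le_one (ν i * T))

lemma cosSeries_le_cosSeries_zero (hc0 : 0 ≤ c) (hc : Summable c) (T : ℝ) :
    cosSeries c ν T ≤ cosSeries c ν 0 := by
  simp only [cosSeries, mul_zero, Real.cos_zero, mul_one]
  exact (summable_mul_cos ν hc T).tsum_le_tsum
    (fun i => mul_le_of_le_one_right (hc0 i) (cos_le_one _)) hc

lemma mapClusterPt_cosSeries_zero (hc : Summable c) :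
    MapClusterPt (cosSeries c ν 0) atTop (cosSeries c ν) := by
  let J : (ι → Circle) → ℝ := fun z => ∑' i, c i * (z i : ℂ).re
  have hJ : Continuous J := by
    refine continuous_tsum (fun i => by fun_prop) hc.abs fun i z => ?_
    simpa [abs_mul] using mul_le_of_le_one_right (abs_nonneg (c i))
      ((abs_re_le_norm _).trans (Circle.norm_coe (z i)).le)
  have hJexp : ∀ T : ℝ, J (fun i => Circle.exp (ν i * T)) = cosSeries c ν T := fun T => by
    simp only [J, cosSeries, Circle.coe_exp, exp_ofReal_mul_I_re]
  have hpow : ∀ n : ℕ, (fun i => Circle.exp (ν i)) ^ n = fun i => Circle.exp (ν i * n) :=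
    fun n => funext fun i => by simp [mul_comm (ν i)]
  have h := (mapClusterPt_one_atTop_pow fun i => Circle.exp (ν i)).continuousAt_comp
    hJ.continuousAt
  refine MapClusterPt.of_comp tendsto_natCast_atTop_atTop ?_
  convert h using 1
  · simpa [Pi.one_def] using (hJexp 0).symm
  · funext n
    simp [hpow, hJexp]

theorem iSup_cosSeries (hc0 : 0 ≤ c) (hc : Summable c) :
    ⨆ T : ℝ, (cosSeries c ν T : EReal) = cosSeries c ν 0 :=
  le_antisymm (iSup_le fun T => EReal.coe_le_coe_iff.2 (cosSeries_le_cosSeries_zero ν hc0 hc T))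
    (le_iSup_of_le 0 le_rfl)

theorem limsup_cosSeries (hc0 : 0 ≤ c) (hc : Summable c) :
    limsup (fun T : ℝ => (cosSeries c ν T : EReal)) atTop = cosSeries c ν 0 :=
  le_antisymm
    (limsup_le_of_le (by isBoundedDefault) (Eventually.of_forall fun T =>
      EReal.coe_le_coe_iff.2 (cosSeries_le_cosSeries_zero ν hc0 hc T)))
    ((mapClusterPt_cosSeries_zero ν hc).continuousAt_comp
      continuous_coe_real_ereal.continuousAt).le_limsup

end CosSeries

section EvenWeight

variable {w : ℝ → ℝ} {a : ℝ}

lemma integral_sin_mul_eq_zero_of_even (hw : ∀ t, w (-t) = w t) (ν : ℝ) :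
    ∫ t in -a..a, Real.sin (ν * t) * w t = 0 := by
  have h := integral_comp_neg (a := -a) (b := a) fun t => Real.sin (ν * t) * w t
  simp only [mul_neg, Real.sin_neg, neg_mul, hw, intervalIntegral.integral_neg, neg_neg] at h
  linarith

lemma integral_cos_add_mul_of_even (hw : ∀ t, w (-t) = w t)
    (hwi : IntervalIntegrable w volume (-a) a) (ν T : ℝ) :
    ∫ t in -a..a, Real.cos (ν * (T + t)) * w t =
      Real.cos (ν * T) * ∫ t in -a..a, Real.cos (ν * t) * w t := by
  have hcos : IntervalIntegrable (fun t => Real.cos (ν * t) * w t) volume (-a) a :=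
    hwi.continuousOn_mul (by fun_prop)
  have hsin : IntervalIntegrable (fun t => Real.sin (ν * t) * w t) volume (-a) a :=
    hwi.continuousOn_mul (by fun_prop)
  simp_rw [mul_add, Real.cos_add, sub_mul, mul_assoc]
  rw [intervalIntegral.integral_sub (hcos.const_mul _) (hsin.const_mul _),
    intervalIntegral.integral_const_mul, intervalIntegral.integral_const_mul,
    integral_sin_mul_eq_zero_of_even hw, mul_zero, sub_zero]

lemma hasSum_integral_cosSeries_mul_of_even {ι : Type*} [Countable ι] {c : ι → ℝ} (ν : ι → ℝ)
    (hc : Summable c) (hw : ∀ t, w (-t) = w t) (hwi : IntervalIntegrable w volume (-a) a)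
    (T : ℝ) :
    HasSum (fun i => c i * (∫ t in -a..a, Real.cos (ν i * t) * w t) * Real.cos (ν i * T))
      (∫ t in -a..a, cosSeries c ν (T + t) * w t) := by
  have hterm : ∀ i, IntervalIntegrable (fun t => c i * Real.cos (ν i * (T + t)) * w t)
      volume (-a) a := fun i => hwi.continuousOn_mul (by fun_prop)
  have key := intervalIntegral.hasSum_integral_of_dominated_convergence
    (F := fun i t => c i * Real.cos (ν i * (T + t)) * w t)
    (fun i t => |c i| * |w t|) (fun i => (hterm i).def'.aestronglyMeasurable)
    (fun i => Eventually.of_forall fun t _ => by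
      simpa [abs_mul] using mul_le_mul_of_nonneg_right
        (mul_le_of_le_one_right (abs_nonneg (c i)) (abs_cos_le_one _)) (abs_nonneg (w t)))
    (Eventually.of_forall fun t _ => hc.abs.mul_right _)
    (by simpa only [tsum_mul_right] using hwi.abs.const_mul _)
    (Eventually.of_forall fun t _ => (summable_mul_cos ν hc (T + t)).hasSum.mul_right (w t))
  refine key.congr_fun fun i => ?_
  simp only [mul_assoc, intervalIntegral.integral_const_mul,
    integral_cos_add_mul_of_even hw hwi]
  ring

end EvenWeight

lemma integral_cos_mul_sub_nonneg {δ : ℝ} (hδ : 0 ≤ δ) (ν : ℝ) :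
    0 ≤ ∫ t in 0..δ, Real.cos (ν * t) * (δ - t) := by
  rcases eq_or_ne ν 0 with rfl | hν
  · exact integral_nonneg hδ fun t ht => by simp [ht.2]
  have hderiv : ∀ t ∈ Set.uIcc 0 δ, HasDerivAt
      (fun t => (δ - t) * Real.sin (ν * t) / ν - Real.cos (ν * t) / ν ^ 2)
      (Real.cos (ν * t) * (δ - t)) t := fun t _ => by
    have hlin : HasDerivAt (fun t => ν * t) ν t := by simpa using (hasDerivAt_id t).const_mul ν
    refine ((((hasDerivAt_id t).const_sub δ).mul ((Real.hasDerivAt_sin _).comp t hlin)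
      |>.div_const ν).sub (((Real.hasDerivAt_cos _).comp t hlin).div_const (ν ^ 2))).congr_deriv ?_
    simp only [Function.comp_apply, id]
    field_simp
    ring
  rw [integral_eq_sub_of_hasDerivAt hderiv (by apply Continuous.intervalIntegrable; fun_prop)]
  simp only [sub_self, zero_mul, zero_div, mul_zero, Real.cos_zero, Real.sin_zero, sub_zero]
  have h := div_nonneg (sub_nonneg.2 (Real.cos_le_one (ν * δ))) (sq_nonneg ν)
  rw [sub_div] at h
  linarith

lemma integral_cos_mul_sub_abs_nonneg {δ : ℝ} (hδ : 0 ≤ δ) (ν : ℝ) :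
    0 ≤ ∫ t in -δ..δ, Real.cos (ν * t) * (δ - |t|) := by
  have hint : ∀ a b : ℝ, IntervalIntegrable (fun t => Real.cos (ν * t) * (δ - |t|)) volume a b :=
    fun a b => by apply Continuous.intervalIntegrable; fun_prop
  have hleft : ∫ t in -δ..0, Real.cos (ν * t) * (δ - |t|) =
      ∫ t in 0..δ, Real.cos (ν * t) * (δ - |t|) := by
    simpa [Real.cos_neg] using (integral_comp_neg (a := 0) (b := δ)
      fun t => Real.cos (ν * t) * (δ - |t|)).symm
  have hright : ∫ t in 0..δ, Real.cos (ν * t) * (δ - |t|) =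
      ∫ t in 0..δ, Real.cos (ν * t) * (δ - t) :=
    integral_congr fun t ht => by
      rw [Set.uIcc_of_le hδ] at ht
      simp [abs_of_nonneg ht.1]
  rw [← integral_add_adjacent_intervals (hint _ 0) (hint 0 _), hleft, hright, ← two_mul]
  exact mul_nonneg zero_le_two (integral_cos_mul_sub_nonneg hδ ν)

section ExpExpansion

variable {η : Type*}

lemma hasSum_prod_pow_tsum {𝕜 : Type*} [NormedField 𝕜] [CompleteSpace 𝕜] {g : η → 𝕜}
    (hg : Summable fun i => ‖g i‖) (k : ℕ) :
    Summable (fun v : Fin k → η => ‖∏ j, g (v j)‖) ∧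
      HasSum (fun v : Fin k → η => ∏ j, g (v j)) ((∑' i, g i) ^ k) := by
  induction k with
  | zero =>
    exact ⟨.of_finite, by simp⟩
  | succ k ih =>
    let e := Fin.consEquiv fun _ : Fin (k + 1) => η
    have hcons : ∀ x : η × (Fin k → η), ∏ j, g (e x j) = g x.1 * ∏ j, g (x.2 j) := fun x => by
      simp [e, Fin.prod_univ_succ]
    refine ⟨e.summable_iff.1 ?_, e.hasSum_iff.1 ?_⟩
    · simp only [Function.comp_def, hcons, norm_mul]
      exact hg.mul_of_nonneg ih.1 (fun _ => norm_nonneg _) (fun _ => norm_nonneg _)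
    · rw [pow_succ', ← ih.2.tsum_eq, tsum_mul_tsum_of_summable_norm hg ih.1]
      simpa [Function.comp_def, hcons] using (summable_mul_of_summable_norm hg ih.1).hasSum

lemma hasSum_exp_tsum {g : η → ℂ} (hg : Summable fun i => ‖g i‖) :
    HasSum (fun x : Σ k, Fin k → η => ((x.1.factorial : ℂ))⁻¹ * ∏ j, g (x.2 j))
      (Complex.exp (∑' i, g i)) := by
  have hexp : HasSum (fun k : ℕ => ((k.factorial : ℂ))⁻¹ * (∑' i, g i) ^ k)
      (Complex.exp (∑' i, g i)) := by
    rw [Complex.exp_eq_exp_ℂ]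
    simpa only [smul_eq_mul] using NormedSpace.exp_series_hasSum_exp' (𝕂 := ℂ) (∑' i, g i)
  have hfiber : ∀ k : ℕ, HasSum (fun v : Fin k → η => ((k.factorial : ℂ))⁻¹ * ∏ j, g (v j))
      (((k.factorial : ℂ))⁻¹ * (∑' i, g i) ^ k) :=
    fun k => (hasSum_prod_pow_tsum hg k).2.mul_left _
  refine hexp.sigma_of_hasSum hfiber (.of_norm ?_)
  have hnorm : ∀ k : ℕ, HasSum (fun v : Fin k → η => ∏ j, ‖g (v j)‖) ((∑' i, ‖g i‖) ^ k) :=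
    fun k => (hasSum_prod_pow_tsum (g := fun i => ‖g i‖) (by simpa using hg) k).2
  refine (summable_sigma_of_nonneg fun _ => norm_nonneg _).2 ⟨fun k => ?_, ?_⟩
  · simpa [norm_prod] using (hnorm k).summable.mul_left ((k.factorial : ℝ))⁻¹
  · simpa [norm_prod, tsum_mul_left, (hnorm _).tsum_eq, div_eq_inv_mul] using
      Real.summable_pow_div_factorial (∑' i, ‖g i‖)

noncomputable def expCoeff (b : η → ℝ) (x : Σ k, Fin k → η) : ℝ :=
  ((x.1.factorial : ℝ))⁻¹ * ∏ j, b (x.2 j)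

def expFreq (m : η → ℝ) (x : Σ k, Fin k → η) : ℝ := ∑ j, m (x.2 j)

lemma expCoeff_nonneg {b : η → ℝ} (hb : 0 ≤ b) : 0 ≤ expCoeff b :=
  fun _ => mul_nonneg (by positivity) (Finset.prod_nonneg fun _ _ => hb _)

lemma hasSum_exp_tsum_mul_exp {b : η → ℝ} (m : η → ℝ) (hb : Summable b) (θ : ℝ) :
    HasSum (fun x => (expCoeff b x : ℂ) * Complex.exp ((expFreq m x * θ : ℝ) * I))
      (Complex.exp (∑' j, (b j : ℂ) * Complex.exp ((m j * θ : ℝ) * I))) := by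
  have hg : Summable fun j => ‖(b j : ℂ) * Complex.exp ((m j * θ : ℝ) * I)‖ := by
    simpa only [norm_mul, norm_exp_ofReal_mul_I, norm_real, Real.norm_eq_abs, mul_one] using hb.abs
  refine (hasSum_exp_tsum hg).congr_fun fun x => ?_
  simp only [expCoeff, expFreq, Finset.prod_mul_distrib, ← Complex.exp_sum, Finset.sum_mul]
  push_cast
  rw [Finset.sum_mul, mul_assoc]

/-- Writing `cos x = (e^(ix) + e^(-ix)) / 2`, the two copies of `η` carry the two exponentials;
`⟨k, v⟩` indexes the terms of the `k`-th power in the exponential series. -/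
theorem hasSum_exp_cosSeries {a : η → ℝ} (m : η → ℝ) (ha : Summable a) (θ : ℝ) :
    HasSum (fun x => expCoeff (Sum.elim (fun i => a i / 2) (fun i => a i / 2)) x *
        Real.cos (expFreq (Sum.elim m fun i => -m i) x * θ)) (Real.exp (cosSeries a m θ)) := by
  set b := Sum.elim (fun i => a i / 2) (fun i => a i / 2)
  set m' := Sum.elim m fun i => -m i
  have hb : Summable b := .sum b (ha.div_const 2) (ha.div_const 2)
  set g := fun j => (b j : ℂ) * Complex.exp ((m' j * θ : ℝ) * I)
  have hg : Summable g := .of_norm <| by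
    simpa only [g, norm_mul, norm_exp_ofReal_mul_I, norm_real, Real.norm_eq_abs, mul_one]
      using hb.abs
  have hinl := (hg.comp_injective Sum.inl_injective).hasSum
  have hinr := (hg.comp_injective Sum.inr_injective).hasSum
  have hpair : ∀ i, g (.inl i) + g (.inr i) = ((a i * Real.cos (m i * θ) : ℝ) : ℂ) := fun i => by
    simp only [g, b, m', Sum.elim_inl, Sum.elim_inr]
    push_cast
    rw [Complex.cos]
    ring_nf
  have hvalue : ∑' i, (g ∘ .inl) i + ∑' i, (g ∘ .inr) i = cosSeries a m θ :=
    ((hinl.add hinr).congr_fun fun i => (hpair i).symm).unique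
      (Complex.hasSum_ofReal.2 (summable_mul_cos m ha θ).hasSum)
  have hsum : HasSum g (cosSeries a m θ) := hvalue ▸ hinl.sum hinr
  have h := Complex.hasSum_re (hasSum_exp_tsum_mul_exp m' hb θ)
  rw [hsum.tsum_eq, ← Complex.ofReal_exp, Complex.ofReal_re] at h
  simpa only [re_ofReal_mul, exp_ofReal_mul_I_re] using h

end ExpExpansion

section Zeta

noncomputable def logZetaCoeff (σ : ℝ) (n : ℕ) : ℝ := Λ n / Real.log n * (n : ℝ) ^ (-σ)

lemma logZetaCoeff_nonneg (σ : ℝ) : 0 ≤ logZetaCoeff σ := fun n =>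
  mul_nonneg (div_nonneg ArithmeticFunction.vonMangoldt_nonneg (Real.log_natCast_nonneg n))
    (Real.rpow_nonneg n.cast_nonneg _)

noncomputable def zetaPowCoeff (σ p : ℝ) : (Σ k, Fin k → ℕ ⊕ ℕ) → ℝ :=
  expCoeff (Sum.elim (fun n => p * logZetaCoeff σ n / 2) fun n => p * logZetaCoeff σ n / 2)

noncomputable def zetaPowFreq : (Σ k, Fin k → ℕ ⊕ ℕ) → ℝ :=
  expFreq (Sum.elim (fun n : ℕ => Real.log n) fun n => -Real.log n)

lemma zetaPowCoeff_nonneg (σ : ℝ) {p : ℝ} (hp : 0 ≤ p) : 0 ≤ zetaPowCoeff σ p := by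
  refine expCoeff_nonneg fun j => ?_
  cases j <;> exact div_nonneg (mul_nonneg hp (logZetaCoeff_nonneg σ _)) zero_le_two

lemma re_natCast_cpow_neg {n : ℕ} (hn : n ≠ 0) (σ θ : ℝ) :
    ((n : ℂ) ^ (-(σ + θ * I))).re = (n : ℝ) ^ (-σ) * Real.cos (Real.log n * θ) := by
  have hpos : (0 : ℝ) < n := by positivity
  have hexponent : (Real.log n : ℂ) * -(σ + θ * I) =
      ((-σ * Real.log n : ℝ) : ℂ) + ((-(Real.log n * θ) : ℝ) : ℂ) * I := by
    push_cast
    ring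
  rw [cpow_def_of_ne_zero (by exact_mod_cast hn), ← ofReal_natCast, ← ofReal_log hpos.le,
    hexponent, Complex.exp_add, ← ofReal_exp, re_ofReal_mul, exp_ofReal_mul_I_re, Real.cos_neg,
    Real.rpow_def_of_pos hpos, mul_comm (-σ)]

lemma hasSum_log_norm_riemannZeta {σ : ℝ} (hσ : 1 < σ) (θ : ℝ) :
    HasSum (fun n => logZetaCoeff σ n * Real.cos (Real.log n * θ))
      (Real.log ‖riemannZeta (σ + θ * I)‖) := by
  have hs : 1 < (σ + θ * I : ℂ).re := by simpa using hσ
  rw [← riemannZeta_eq_exp_LSeries hs, norm_exp, Real.log_exp]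
  have hsum : LSeriesSummable (fun n : ℕ => (Λ n / Real.log n : ℂ)) (σ + θ * I) := by
    refine LSeriesSummable_of_le_const_mul_rpow (x := 1) (by simpa using hσ) ⟨1, fun n _ => ?_⟩
    rw [sub_self, Real.rpow_zero, mul_one, ← ofReal_div, norm_real, Real.norm_eq_abs,
      abs_of_nonneg (div_nonneg ArithmeticFunction.vonMangoldt_nonneg (Real.log_natCast_nonneg n))]
    exact div_le_one_of_le₀ ArithmeticFunction.vonMangoldt_le_log (Real.log_natCast_nonneg n)
  refine (Complex.hasSum_re hsum.hasSum).congr_fun fun n => ?_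
  rcases eq_or_ne n 0 with rfl | hn
  · simp [logZetaCoeff]
  · rw [LSeries.term_def₀ (by simp), ← ofReal_div, re_ofReal_mul, re_natCast_cpow_neg hn,
      logZetaCoeff, mul_assoc]

theorem hasSum_norm_riemannZeta_rpow {σ : ℝ} (hσ : 1 < σ) (p θ : ℝ) :
    HasSum (fun x => zetaPowCoeff σ p x * Real.cos (zetaPowFreq x * θ))
      (‖riemannZeta (σ + θ * I)‖ ^ p) := by
  have hlog := fun θ => (hasSum_log_norm_riemannZeta hσ θ).mul_left p
  have ha : Summable fun n => p * logZetaCoeff σ n := by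
    simpa only [mul_zero, Real.cos_zero, mul_one] using (hlog 0).summable
  have hζ : 0 < ‖riemannZeta (σ + θ * I)‖ :=
    norm_pos_iff.2 (riemannZeta_ne_zero_of_one_lt_re (by simpa using hσ))
  have hexponent : Real.log ‖riemannZeta (σ + θ * I)‖ * p =
      cosSeries (fun n => p * logZetaCoeff σ n) (fun n => Real.log n) θ := by
    rw [mul_comm, ← (hlog θ).tsum_eq, cosSeries]
    simp only [mul_assoc]
  rw [Real.rpow_def_of_pos hζ, hexponent]
  exact hasSum_exp_cosSeries _ ha θ

end Zeta

theorem stmt_5 (σ : ℝ) (hσ : 1 < σ) (p : ℝ) (hp : 0 ≤ p) (δ : ℝ) (hδ : 0 < δ) :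
    (⨆ T : ℝ, ((∫ t in (-δ)..δ,
        ‖riemannZeta (σ + (T + t) * Complex.I)‖ ^ p * (δ - |t|) : ℝ) : EReal)) =
      ((∫ t in (-δ)..δ, ‖riemannZeta (σ + t * Complex.I)‖ ^ p * (δ - |t|) : ℝ) : EReal) ∧
    Filter.limsup (fun T : ℝ => ((∫ t in (-δ)..δ,
        ‖riemannZeta (σ + (T + t) * Complex.I)‖ ^ p * (δ - |t|) : ℝ) : EReal)) Filter.atTop =
      ((∫ t in (-δ)..δ, ‖riemannZeta (σ + t * Complex.I)‖ ^ p * (δ - |t|) : ℝ) : EReal) := by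
  have hζ (θ : ℝ) : ‖riemannZeta (σ + θ * I)‖ ^ p = cosSeries (zetaPowCoeff σ p) zetaPowFreq θ :=
    (hasSum_norm_riemannZeta_rpow hσ p θ).tsum_eq.symm
  have hc : Summable (zetaPowCoeff σ p) := by
    simpa using (hasSum_norm_riemannZeta_rpow hσ p 0).summable
  set c := fun x => zetaPowCoeff σ p x * ∫ t in -δ..δ, Real.cos (zetaPowFreq x * t) * (δ - |t|)
  have hI (T : ℝ) : HasSum (fun x => c x * Real.cos (zetaPowFreq x * T))
      (∫ t in -δ..δ, ‖riemannZeta (σ + (T + t) * I)‖ ^ p * (δ - |t|)) := by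
    have hintegrand : (fun t : ℝ => ‖riemannZeta (σ + (T + t) * I)‖ ^ p * (δ - |t|)) =
        fun t => cosSeries (zetaPowCoeff σ p) zetaPowFreq (T + t) * (δ - |t|) :=
      funext fun t => by rw [← hζ, ofReal_add]
    rw [hintegrand]
    exact hasSum_integral_cosSeries_mul_of_even zetaPowFreq hc (w := fun t => δ - |t|) (by simp)
      (by apply Continuous.intervalIntegrable; fun_prop) T
  have hc0 : 0 ≤ c := fun x =>
    mul_nonneg (zetaPowCoeff_nonneg σ hp x) (integral_cos_mul_sub_abs_nonneg hδ.le _)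
  have hcs : Summable c := by simpa using (hI 0).summable
  have hval (T : ℝ) : ∫ t in -δ..δ, ‖riemannZeta (σ + (T + t) * I)‖ ^ p * (δ - |t|) =
      cosSeries c zetaPowFreq T := (hI T).tsum_eq.symm
  have hval0 : ∫ t in -δ..δ, ‖riemannZeta (σ + t * I)‖ ^ p * (δ - |t|) =
      cosSeries c zetaPowFreq 0 := by simpa using hval 0
  simp only [hval, hval0]
  exact ⟨iSup_cosSeries _ hc0 hcs, limsup_cosSeries _ hc0 hcs⟩
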